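/- arXiv:1705.01395 — 4 statements merged into one kernel-verified Lean document; each statement's English description precedes it below -/
import Mathlib

section
/- Let r = (√5−1)/2 and let ν be the measure on [0,1] with density f(x) = 2x/r on [0,r] and f(x) = 2(1−x)/r² on [r,1] with respect to Lebesgue measure. Then ν satisfies the self-similarity equation ν(E) = r²·ν(S₀⁻¹(E)) + (1−r²)·ν(R₁⁻¹(E)) for all Borel sets E ⊆ [0,1], where S₀(x) = rx and R₁(x) = 1 − rx. -/
open MeasureTheory

/-- Change of variables for an affine map under Lebesgue integral. -/
lemma lint_affine (c d : ℝ) (hc : c ≠ 0) (F : ℝ → ENNReal) (hF : Measurable F) :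
    ∫⁻ x, F (d + c * x) = ENNReal.ofReal |c⁻¹| * ∫⁻ y, F y := by
  have h1 : Measurable fun y : ℝ => F (d + y) := hF.comp (measurable_const_add d)
  have h2 : (∫⁻ x, F (d + c * x))
      = ∫⁻ y, (fun y => F (d + y)) y ∂(Measure.map (fun x => c * x) volume) := by
    rw [lintegral_map h1 (measurable_const_mul c)]
  rw [h2, Real.map_volume_mul_left hc, lintegral_smul_measure]
  congr 1
  rw [← lintegral_map hF (measurable_const_add d), map_add_left_eq_self volume d]

set_option maxHeartbeats 1000000 in
theorem golden_density_self_similar :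
    let r : ℝ := (Real.sqrt 5 - 1) / 2
    let f : ℝ → ℝ := fun x => if x ≤ r then 2 * x / r else 2 * (1 - x) / r ^ 2
    let ν : Measure ℝ :=
      (volume.withDensity fun x => ENNReal.ofReal (f x)).restrict (Set.Icc 0 1)
    ∀ E : Set ℝ, MeasurableSet E → E ⊆ Set.Icc (0 : ℝ) 1 →
      ν E = ENNReal.ofReal (r ^ 2) * ν ((fun x => r * x) ⁻¹' E)
          + ENNReal.ofReal (1 - r ^ 2) * ν ((fun x => 1 - r * x) ⁻¹' E) := by
  intro r f ν E hE hEsub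
  -- basic facts about r
  have h5 : Real.sqrt 5 ^ 2 = 5 := Real.sq_sqrt (by norm_num)
  have h5nn : (0:ℝ) ≤ Real.sqrt 5 := Real.sqrt_nonneg 5
  have hr0 : 0 < r := by
    show (0:ℝ) < (Real.sqrt 5 - 1) / 2; nlinarith [h5, h5nn]
  have hr1 : r < 1 := by
    show (Real.sqrt 5 - 1) / 2 < 1; nlinarith [h5, h5nn]
  have hrsq : r ^ 2 = 1 - r := by
    show ((Real.sqrt 5 - 1) / 2) ^ 2 = 1 - (Real.sqrt 5 - 1) / 2; nlinarith [h5]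
  have hrne : r ≠ 0 := ne_of_gt hr0
  have hfmeas : Measurable f := by
    exact Measurable.ite (measurableSet_le measurable_id measurable_const)
      (by fun_prop) (by fun_prop)
  set g : ℝ → ENNReal := (Set.Icc (0:ℝ) 1).indicator (fun x => ENNReal.ofReal (f x)) with hg
  have hgmeas : Measurable g := (hfmeas.ennreal_ofReal).indicator measurableSet_Icc
  -- extended real-valued density
  set ft : ℝ → ℝ := fun y => if 0 ≤ y ∧ y ≤ 1 then f y else 0 with hft
  have hgft : ∀ y, g y = ENNReal.ofReal (ft y) := by
    intro y
    by_cases h : y ∈ Set.Icc (0:ℝ) 1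
    · rw [hg]
      simp [Set.indicator_of_mem h, hft, Set.mem_Icc.mp h]
    · rw [hg]
      simp only [Set.indicator_of_notMem h, hft]
      rw [if_neg (by simpa [Set.mem_Icc] using h)]
      simp
  have hfval : ∀ y : ℝ, f y = if y ≤ r then 2 * y / r else 2 * (1 - y) / r ^ 2 :=
    fun y => rfl
  have hftnn : ∀ y, 0 ≤ ft y := by
    intro y
    rw [hft]
    dsimp only
    split_ifs with h
    · rw [hfval]
      split_ifs with h2
      · exact div_nonneg (by linarith [h.1]) hr0.le
      · exact div_nonneg (by linarith [h.2]) (by positivity)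
    · exact le_refl 0
  -- the key pointwise identity for the extended density
  have core : ∀ y ∈ Set.Icc (0:ℝ) 1, ft y = r * ft (y * r⁻¹) + ft ((1 - y) * r⁻¹) := by
    intro y hy
    obtain ⟨hy0, hy1⟩ := Set.mem_Icc.mp hy
    have hrr : r * r⁻¹ = 1 := mul_inv_cancel₀ hrne
    rw [hft]
    dsimp only
    simp_rw [hfval, ← div_eq_mul_inv]
    have e1 : (0 ≤ y / r) := div_nonneg hy0 hr0.le
    have e2 : (0 ≤ (1 - y) / r) := div_nonneg (by linarith) hr0.le
    rw [if_pos ⟨hy0, hy1⟩]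
    simp only [div_le_one hr0, div_le_iff₀ hr0, e1, e2, true_and]
    have hrsq' : r * r = 1 - r := by rw [← sq]; exact hrsq
    have hrcube : r ^ 3 = 2 * r - 1 := by nlinarith [hrsq]
    have hr4 : r ^ 4 = 2 - 3 * r := by nlinarith [hrsq]
    have hr5 : r ^ 5 = 5 * r - 3 := by nlinarith [hrsq, hrcube]
    have hrhalf : (1:ℝ)/2 < r := by
      show (1:ℝ)/2 < (Real.sqrt 5 - 1) / 2; nlinarith [h5, h5nn]
    split_ifs <;> first
      | (exfalso; linarith)
      | (field_simp; all_goals (first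
          | ring1
          | (left; ring1)
          | linear_combination (2*r*y - 2*r) * hrsq
          | nlinarith [hrsq, hrsq', hrcube, hr4, hr5, hr0, hr1, hy0, hy1]))
      | (have hyr : y = r := by linarith
         rw [hyr]; field_simp; all_goals (first
           | ring1
           | nlinarith [hrsq, hrsq', hrcube, hr4, hr5, hr0, hr1]))
      | (have hyr : y = 1 - r := by linarith
         rw [hyr]; field_simp; all_goals (first
           | ring1
           | nlinarith [hrsq, hrsq', hrcube, hr4, hr5, hr0, hr1]))
  have hrr : r * r⁻¹ = 1 := mul_inv_cancel₀ hrne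
  -- ν applied to a measurable set, as a full-space lintegral
  have hν : ν = volume.withDensity g := by
    show (volume.withDensity fun x => ENNReal.ofReal (f x)).restrict (Set.Icc 0 1)
        = volume.withDensity g
    rw [restrict_withDensity measurableSet_Icc, hg, withDensity_indicator measurableSet_Icc]
  have hνapp : ∀ A : Set ℝ, MeasurableSet A → ν A = ∫⁻ x, A.indicator g x := by
    intro A hA
    rw [hν, withDensity_apply g hA, lintegral_indicator hA]
  have hm1 : Measurable fun x : ℝ => r * x := measurable_const_mul r
  have hm2 : Measurable fun x : ℝ => 1 - r * x := measurable_const.sub hm1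
  have hmeas1 : Measurable fun y : ℝ => E.indicator (fun z => g (z * r⁻¹)) y :=
    (hgmeas.comp (measurable_mul_const r⁻¹)).indicator hE
  have hmeas2 : Measurable fun y : ℝ => E.indicator (fun z => g ((1 - z) * r⁻¹)) y :=
    (hgmeas.comp ((measurable_const_sub 1).mul_const r⁻¹)).indicator hE
  -- change of variables for the first term
  have hsub1 : (∫⁻ x, ((fun x => r * x) ⁻¹' E).indicator g x)
      = ENNReal.ofReal r⁻¹ * ∫⁻ y, E.indicator (fun z => g (z * r⁻¹)) y := by
    have key : ∀ x : ℝ, ((fun x => r * x) ⁻¹' E).indicator g x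
        = E.indicator (fun z => g (z * r⁻¹)) (0 + r * x) := by
      intro x
      have hxx : r * x * r⁻¹ = x := by
        rw [mul_comm r x, mul_assoc, hrr, mul_one]
      simp only [Set.indicator, Set.mem_preimage, zero_add, hxx]
      by_cases hx : r * x ∈ E <;> simp [Set.mem_preimage, hx]
    simp_rw [key]
    rw [lint_affine r 0 hrne _ hmeas1, abs_of_nonneg (inv_nonneg.mpr hr0.le)]
  -- change of variables for the second term
  have hsub2 : (∫⁻ x, ((fun x => 1 - r * x) ⁻¹' E).indicator g x)
      = ENNReal.ofReal r⁻¹ * ∫⁻ y, E.indicator (fun z => g ((1 - z) * r⁻¹)) y := by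
    have key : ∀ x : ℝ, ((fun x => 1 - r * x) ⁻¹' E).indicator g x
        = E.indicator (fun z => g ((1 - z) * r⁻¹)) (1 + (-r) * x) := by
      intro x
      have h1 : (1:ℝ) + (-r) * x = 1 - r * x := by ring
      have hxx : (1 - (1 - r * x)) * r⁻¹ = x := by
        rw [show (1:ℝ) - (1 - r * x) = r * x by ring, mul_comm r x, mul_assoc, hrr, mul_one]
      rw [h1]
      simp only [Set.indicator, Set.mem_preimage, hxx]
      by_cases hx : (1 : ℝ) - r * x ∈ E <;> simp [Set.mem_preimage, hx]
    simp_rw [key]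
    rw [lint_affine (-r) 1 (by simpa using hrne) _ hmeas2,
      show |(-r)⁻¹| = r⁻¹ by rw [abs_inv, abs_neg, abs_of_nonneg hr0.le]]
  -- coefficient computations
  have c1 : ENNReal.ofReal (r ^ 2) * ENNReal.ofReal r⁻¹ = ENNReal.ofReal r := by
    rw [← ENNReal.ofReal_mul (sq_nonneg r)]
    congr 1
    rw [sq, mul_assoc, hrr, mul_one]
  have c2 : ENNReal.ofReal (1 - r ^ 2) * ENNReal.ofReal r⁻¹ = 1 := by
    rw [← ENNReal.ofReal_mul (by nlinarith [hrsq])]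
    rw [show (1 - r ^ 2) * r⁻¹ = 1 by rw [hrsq, show (1:ℝ) - (1 - r) = r by ring, hrr]]
    exact ENNReal.ofReal_one
  -- put everything together
  calc ν E = ∫⁻ y, E.indicator g y := hνapp E hE
    _ = ∫⁻ y, (ENNReal.ofReal r * E.indicator (fun z => g (z * r⁻¹)) y
          + E.indicator (fun z => g ((1 - z) * r⁻¹)) y) := by
        refine lintegral_congr fun y => ?_
        by_cases hy : y ∈ E
        · simp only [Set.indicator_of_mem hy]
          rw [hgft y, hgft (y * r⁻¹), hgft ((1 - y) * r⁻¹), core y (hEsub hy),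
            ENNReal.ofReal_add (mul_nonneg hr0.le (hftnn _)) (hftnn _),
            ENNReal.ofReal_mul hr0.le]
        · simp [Set.indicator_of_notMem hy]
    _ = ENNReal.ofReal r * (∫⁻ y, E.indicator (fun z => g (z * r⁻¹)) y)
          + ∫⁻ y, E.indicator (fun z => g ((1 - z) * r⁻¹)) y := by
        rw [lintegral_add_left (hmeas1.const_mul _), lintegral_const_mul _ hmeas1]
    _ = ENNReal.ofReal (r ^ 2) * ν ((fun x => r * x) ⁻¹' E)
          + ENNReal.ofReal (1 - r ^ 2) * ν ((fun x => 1 - r * x) ⁻¹' E) := by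
        rw [hνapp _ (hE.preimage hm1), hνapp _ (hE.preimage hm2), hsub1, hsub2,
          ← mul_assoc, ← mul_assoc, c1, c2, one_mul]
end

section
/- Let p₀, p₁ > 0 with p₀ + p₁ = 1 and p₀ ≠ p₁. Let T₁ = [[p₀²p₁, p₀²p₁],[p₀p₁², p₀p₁²]] and T₂ = [[p₀p₁, p₀p₁],[0, p₁²]]. Then the spectral radius of T₁T₂^k equals Σ_{j=1}^{k+2} p₀^j p₁^{2k+3−j} = (1 − (p₀/p₁)^{k+2}) · p₀ p₁^{2k+3}/(p₁ − p₀). -/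
/-!
Writing `T₁ = p₀p₁ • [[p₀, p₀], [p₁, p₁]]` and `T₂ = p₁ • [[p₀, p₀], [0, p₁]]`, the product `T₁T₂^k`
is singular, so its spectrum is `{0, trace}` and its spectral radius is the absolute value of its
trace. The power of the upper triangular factor carries the geometric sum
`∑ p₀^i p₁^(k-1-i)` in its corner, which makes the trace `p₀ p₁^(k+1) ∑_{i<k+2} p₀^i p₁^(k+1-i)`;
multiplying the geometric sum by `p₁ - p₀` gives the closed form.
-/

open Finset Matrix

noncomputable def specRad (M : Matrix (Fin 2) (Fin 2) ℝ) : ℝ :=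
  sSup (abs '' spectrum ℝ M)

theorem Matrix.spectrum_fin_two_of_det_eq_zero {K : Type*} [Field K]
    (M : Matrix (Fin 2) (Fin 2) K) (hdet : M.det = 0) : spectrum K M = {0, M.trace} := by
  ext μ
  rw [mem_spectrum_iff_isRoot_charpoly, charpoly_fin_two, hdet]
  simp only [Polynomial.IsRoot, Polynomial.eval_add, Polynomial.eval_sub, Polynomial.eval_pow,
    Polynomial.eval_mul, Polynomial.eval_X, Polynomial.eval_C, add_zero, Set.mem_insert_iff,
    Set.mem_singleton_iff]
  rw [show μ ^ 2 - M.trace * μ = μ * (μ - M.trace) by ring, mul_eq_zero, sub_eq_zero]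

theorem specRad_eq_abs_trace_of_det_eq_zero {M : Matrix (Fin 2) (Fin 2) ℝ} (hdet : M.det = 0) :
    specRad M = |M.trace| := by
  rw [specRad, spectrum_fin_two_of_det_eq_zero M hdet, Set.image_pair, abs_zero, csSup_pair,
    max_eq_right (abs_nonneg _)]

theorem Matrix.upperTriangular_fin_two_pow {R : Type*} [CommRing R] (a b d : R) (n : ℕ) :
    !![a, b; 0, d] ^ n = !![a ^ n, b * ∑ i ∈ range n, a ^ i * d ^ (n - 1 - i); 0, d ^ n] := by
  induction n with
  | zero => simp [one_fin_two]
  | succ n ih =>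
    rw [pow_succ, ih, mul_fin_two, Nat.add_sub_cancel, geom_sum₂_succ_eq]
    ext i j
    fin_cases i <;> fin_cases j <;> simp [pow_succ]
    ring

theorem trace_mul_pow_eq_geom_sum₂ {R : Type*} [CommRing R] (x y : R) (k : ℕ) :
    (!![x, x; y, y] * !![x, x; 0, y] ^ k).trace
      = ∑ i ∈ range (k + 2), x ^ i * y ^ (k + 1 - i) := by
  have hsucc : ∑ i ∈ range (k + 1), x ^ i * y ^ (k - i)
      = y ^ k + x * ∑ i ∈ range k, x ^ i * y ^ (k - 1 - i) := by
    rw [sum_range_succ', mul_sum, add_comm]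
    congr 1
    · simp
    · refine sum_congr rfl fun i _ => ?_
      rw [pow_succ, Nat.sub_sub, add_comm 1 i]
      ring
  rw [upperTriangular_fin_two_pow, mul_fin_two, trace_fin_two_of, geom_sum₂_succ_eq,
    Nat.add_sub_cancel, hsucc]
  ring

theorem sum_Icc_pow_mul_pow_eq {R : Type*} [CommSemiring R] (x y : R) (k : ℕ) :
    ∑ j ∈ Icc 1 (k + 2), x ^ j * y ^ (2 * k + 3 - j)
      = x * y ^ (k + 1) * ∑ i ∈ range (k + 2), x ^ i * y ^ (k + 1 - i) := by
  rw [← Ico_add_one_right_eq_Icc, sum_Ico_eq_sum_range, mul_sum]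
  refine sum_congr (by congr 1) fun i hi => ?_
  rw [show 2 * k + 3 - (1 + i) = (k + 1) + (k + 1 - i) by grind, pow_add, pow_add]
  ring

theorem mul_geom_sum₂_eq_one_sub_div_pow_mul {K : Type*} [Field K] {x y : K} (hy : y ≠ 0)
    (hxy : x ≠ y) (k : ℕ) :
    x * y ^ (k + 1) * ∑ i ∈ range (k + 2), x ^ i * y ^ (k + 1 - i)
      = (1 - (x / y) ^ (k + 2)) * (x * y ^ (2 * k + 3) / (y - x)) := by
  have hgeom := geom_sum₂_mul x y (k + 2)
  rw [show k + 2 - 1 = k + 1 by rfl] at hgeom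
  have hyx : y - x ≠ 0 := sub_ne_zero.mpr hxy.symm
  rw [div_pow, one_sub_div (pow_ne_zero _ hy), div_mul_div_comm,
    eq_div_iff (mul_ne_zero (pow_ne_zero _ hy) hyx), show 2 * k + 3 = (k + 1) + (k + 2) by ring,
    pow_add]
  linear_combination (-(x * y ^ (k + 1) * y ^ (k + 2))) * hgeom

theorem specRad_T1_T2_pow_general (p₀ p₁ : ℝ) (h₀ : 0 < p₀) (h₁ : 0 < p₁)
    (hne : p₀ < p₁) (k : ℕ) :
    specRad (!![p₀ ^ 2 * p₁, p₀ ^ 2 * p₁; p₀ * p₁ ^ 2, p₀ * p₁ ^ 2] *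
        (!![p₀ * p₁, p₀ * p₁; 0, p₁ ^ 2] : Matrix (Fin 2) (Fin 2) ℝ) ^ k) =
      ∑ j ∈ Finset.Icc 1 (k + 2), p₀ ^ j * p₁ ^ (2 * k + 3 - j) ∧
    (∑ j ∈ Finset.Icc 1 (k + 2), p₀ ^ j * p₁ ^ (2 * k + 3 - j)) =
      (1 - (p₀ / p₁) ^ (k + 2)) * (p₀ * p₁ ^ (2 * k + 3) / (p₁ - p₀)) := by
  have hT₁ : !![p₀ ^ 2 * p₁, p₀ ^ 2 * p₁; p₀ * p₁ ^ 2, p₀ * p₁ ^ 2]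
      = (p₀ * p₁) • !![p₀, p₀; p₁, p₁] := by
    ext i j; fin_cases i <;> fin_cases j <;> simp <;> ring
  have hT₂ : !![p₀ * p₁, p₀ * p₁; 0, p₁ ^ 2] = p₁ • !![p₀, p₀; 0, p₁] := by
    ext i j; fin_cases i <;> fin_cases j <;> simp <;> ring
  have hprod : !![p₀ ^ 2 * p₁, p₀ ^ 2 * p₁; p₀ * p₁ ^ 2, p₀ * p₁ ^ 2] *
      !![p₀ * p₁, p₀ * p₁; 0, p₁ ^ 2] ^ k
      = (p₀ * p₁ ^ (k + 1)) • (!![p₀, p₀; p₁, p₁] * !![p₀, p₀; 0, p₁] ^ k) := by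
    rw [hT₁, hT₂, smul_pow, smul_mul_smul, pow_succ', mul_assoc]
  have hdet : (!![p₀ ^ 2 * p₁, p₀ ^ 2 * p₁; p₀ * p₁ ^ 2, p₀ * p₁ ^ 2] *
      !![p₀ * p₁, p₀ * p₁; 0, p₁ ^ 2] ^ k).det = 0 := by
    rw [det_mul, hT₁, det_smul, det_fin_two_of]
    ring
  refine ⟨?_, (sum_Icc_pow_mul_pow_eq p₀ p₁ k).trans
    (mul_geom_sum₂_eq_one_sub_div_pow_mul h₁.ne' hne.ne k)⟩
  rw [specRad_eq_abs_trace_of_det_eq_zero hdet, hprod, trace_smul, trace_mul_pow_eq_geom_sum₂,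
    sum_Icc_pow_mul_pow_eq, smul_eq_mul, abs_of_nonneg (by positivity)]

theorem specRad_T1_T2_pow (p₀ p₁ : ℝ) (h₀ : 0 < p₀) (h₁ : 0 < p₁)
    (hsum : p₀ + p₁ = 1) (hne : p₀ < p₁) (k : ℕ) :
    specRad (!![p₀ ^ 2 * p₁, p₀ ^ 2 * p₁; p₀ * p₁ ^ 2, p₀ * p₁ ^ 2] *
        (!![p₀ * p₁, p₀ * p₁; 0, p₁ ^ 2] : Matrix (Fin 2) (Fin 2) ℝ) ^ k) =
      ∑ j ∈ Finset.Icc 1 (k + 2), p₀ ^ j * p₁ ^ (2 * k + 3 - j) ∧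
    (∑ j ∈ Finset.Icc 1 (k + 2), p₀ ^ j * p₁ ^ (2 * k + 3 - j)) =
      (1 - (p₀ / p₁) ^ (k + 2)) * (p₀ * p₁ ^ (2 * k + 3) / (p₁ - p₀)) :=
  specRad_T1_T2_pow_general p₀ p₁ h₀ h₁ hne k
end

section
/- Let 1/3 ≤ p < 1/2, ε = 1 − 2p (so 0 < ε ≤ p), A = [[p, 0],[p, ε]], B = [[ε, p],[0, p]]. Then for any positive integers k, j, the product A^k B^j is a 2×2 nonnegative matrix in which each entry in the first column is less than or equal to the entry in the same row of the second column. -/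
theorem AkBj_column_dominated (p : ℝ) (hp : 1 / 3 ≤ p) (hp' : p < 1 / 2)
    (k j : ℕ) (hk : 0 < k) (hj : 0 < j) :
    let A : Matrix (Fin 2) (Fin 2) ℝ := !![p, 0; p, 1 - 2 * p]
    let B : Matrix (Fin 2) (Fin 2) ℝ := !![1 - 2 * p, p; 0, p]
    (∀ i l, 0 ≤ (A ^ k * B ^ j) i l) ∧
      ∀ i, (A ^ k * B ^ j) i 0 ≤ (A ^ k * B ^ j) i 1 := by
  intro A B
  have hε0 : (0:ℝ) ≤ 1 - 2 * p := by linarith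
  have hεp : 1 - 2 * p ≤ p := by linarith
  have hp0 : (0:ℝ) ≤ p := by linarith
  have eA00 : A 0 0 = p := rfl
  have eA01 : A 0 1 = 0 := rfl
  have eA10 : A 1 0 = p := rfl
  have eA11 : A 1 1 = 1 - 2 * p := rfl
  have eB00 : B 0 0 = 1 - 2 * p := rfl
  have eB01 : B 0 1 = p := rfl
  have eB10 : B 1 0 = 0 := rfl
  have eB11 : B 1 1 = p := rfl
  -- nonnegativity of powers of A
  have hA : ∀ n : ℕ, 0 ≤ (A ^ n) 0 0 ∧ 0 ≤ (A ^ n) 0 1 ∧ 0 ≤ (A ^ n) 1 0 ∧ 0 ≤ (A ^ n) 1 1 := by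
    intro n
    induction n with
    | zero => simp [Matrix.one_apply]
    | succ n ih =>
      obtain ⟨h00, h01, h10, h11⟩ := ih
      rw [pow_succ]
      refine ⟨?_, ?_, ?_, ?_⟩ <;>
        simp only [Matrix.mul_apply, Fin.sum_univ_two, eA00, eA01, eA10, eA11] <;>
        nlinarith [mul_nonneg h00 hp0, mul_nonneg h01 hp0, mul_nonneg h10 hp0,
          mul_nonneg h11 hp0, mul_nonneg h00 hε0, mul_nonneg h01 hε0,
          mul_nonneg h10 hε0, mul_nonneg h11 hε0]
  -- structure of powers of B
  have hB : ∀ n : ℕ, (B ^ n) 0 0 = (1 - 2 * p) ^ n ∧ 0 ≤ (B ^ n) 0 1 ∧ (B ^ n) 1 0 = 0 ∧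
      (B ^ n) 1 1 = p ^ n := by
    intro n
    induction n with
    | zero => simp [Matrix.one_apply]
    | succ n ih =>
      obtain ⟨h00, h01, h10, h11⟩ := ih
      rw [pow_succ]
      refine ⟨?_, ?_, ?_, ?_⟩ <;>
        simp only [Matrix.mul_apply, Fin.sum_univ_two, eB00, eB01, eB10, eB11, h00, h10, h11]
      · ring
      · nlinarith [pow_nonneg hε0 n, mul_nonneg h01 hp0]
      · ring
      · ring
  -- for n ≥ 1, the (0,1) entry of B^n dominates (0,0)
  have hB2 : ∀ n : ℕ, 1 ≤ n → (B ^ n) 0 0 ≤ (B ^ n) 0 1 := by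
    intro n hn
    induction n, hn using Nat.le_induction with
    | base => rw [pow_one, eB00, eB01]; linarith
    | succ n hn ih =>
      obtain ⟨h00, h01, h10, h11⟩ := hB n
      rw [pow_succ]
      simp only [Matrix.mul_apply, Fin.sum_univ_two, eB00, eB01, eB10, eB11, h00, h10]
      nlinarith [pow_nonneg hε0 n, mul_nonneg h01 hp0]
  obtain ⟨hA00, hA01, hA10, hA11⟩ := hA k
  obtain ⟨hB00, hB01, hB10, hB11⟩ := hB j
  have hBd := hB2 j hj
  have hεn : (0:ℝ) ≤ (1 - 2 * p) ^ j := pow_nonneg hε0 j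
  have hpn : (0:ℝ) ≤ p ^ j := pow_nonneg hp0 j
  constructor
  · simp only [Fin.forall_fin_two, Matrix.mul_apply, Fin.sum_univ_two, hB00, hB10, hB11,
      mul_zero, add_zero]
    exact ⟨⟨mul_nonneg hA00 hεn, add_nonneg (mul_nonneg hA00 hB01) (mul_nonneg hA01 hpn)⟩,
      mul_nonneg hA10 hεn, add_nonneg (mul_nonneg hA10 hB01) (mul_nonneg hA11 hpn)⟩
  · simp only [Fin.forall_fin_two, Matrix.mul_apply, Fin.sum_univ_two, hB10, hB11,
      mul_zero, add_zero]
    constructor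
    · linarith [mul_le_mul_of_nonneg_left hBd hA00, mul_nonneg hA01 hpn]
    · linarith [mul_le_mul_of_nonneg_left hBd hA10, mul_nonneg hA11 hpn]
end

section
/- Let x, y be real numbers with 0 < x, y < 1 that are multiplicatively independent (i.e., there are no nonzero integers m, n with x^m = y^n). Then for each n let k_n be the unique positive integer with x^{k_n} ≤ y^n < x^{k_n − 1}; the set of ratios {x^{k_n}/y^n : n ∈ ℕ} is infinite. -/
theorem mult_indep_ratios_infinite (x y : ℝ) (hx : x ∈ Set.Ioo (0 : ℝ) 1)
    (hy : y ∈ Set.Ioo (0 : ℝ) 1)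
    (hindep : ∀ m n : ℤ, m ≠ 0 → n ≠ 0 → x ^ m ≠ y ^ n)
    (k : ℕ → ℕ) (hk : ∀ n ≥ 1, 0 < k n ∧ x ^ k n ≤ y ^ n ∧ y ^ n < x ^ (k n - 1)) :
    {z : ℝ | ∃ n ≥ 1, z = x ^ k n / y ^ n}.Infinite := by
  obtain ⟨hx0, hx1⟩ := hx
  obtain ⟨hy0, hy1⟩ := hy
  have hinj : Set.InjOn (fun n : ℕ => x ^ k n / y ^ n) (Set.Ici 1) := by
    intro m hm n hn h
    simp only at h
    by_contra hmn
    have hxy : x ^ k m * y ^ n = x ^ k n * y ^ m := by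
      field_simp at h
      linarith [h]
    have key : x ^ ((k m : ℤ) - (k n : ℤ)) = y ^ ((m : ℤ) - (n : ℤ)) := by
      rw [zpow_sub₀ (ne_of_gt hx0), zpow_sub₀ (ne_of_gt hy0), zpow_natCast,
        zpow_natCast, zpow_natCast, zpow_natCast,
        div_eq_div_iff (by positivity) (by positivity)]
      linarith [hxy]
    have h2 : ((m : ℤ) - n) ≠ 0 := sub_ne_zero.mpr (by exact_mod_cast hmn)
    by_cases hkm : k m = k n
    · rw [hkm, sub_self, zpow_zero] at key
      have hym : y ^ m = y ^ n := by
        have h' := key.symm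
        rw [zpow_sub₀ (ne_of_gt hy0), div_eq_one_iff_eq (by positivity)] at h'
        rw [zpow_natCast, zpow_natCast] at h'
        exact h'
      exact hmn (pow_right_injective₀ hy0 hy1.ne hym)
    · have h1 : ((k m : ℤ) - k n) ≠ 0 := sub_ne_zero.mpr (by exact_mod_cast hkm)
      exact hindep _ _ h1 h2 key
  have hset : {z : ℝ | ∃ n ≥ 1, z = x ^ k n / y ^ n}
      = (fun n : ℕ => x ^ k n / y ^ n) '' (Set.Ici 1) := by
    ext z
    simp [Set.mem_image, eq_comm]
  rw [hset]
  exact (Set.Ici_infinite 1).image hinj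
end
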